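/- arXiv:2303.12498 — 5 statements merged into one kernel-verified Lean document; each statement's English description precedes it below -/
import Mathlib

section
/- Let P → Q and P → Q' be homomorphisms of saturated commutative cancellative monoids, and let ⊕_P denote the pushout in the category of saturated commutative monoids. Then there is a canonical isomorphism of sharp monoids between the sharpening of Q ⊕_P Q' and the sharpening of Q̄ ⊕_{P̄} Q̄', where M̄ = M/M^× denotes the sharpening. -/
/-!
Homomorphisms into a sharp monoid kill units, so they factor uniquely through the sharpening;
and the sharpening of a saturated monoid is saturated. Hence the sharpenings of `Q ⊕_P Q'` and
of `Q̄ ⊕_{P̄} Q̄'` are both pushouts of `Q ← P → Q'` in the category of sharp saturated monoids, and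
two such pushouts are canonically isomorphic.
-/

universe u

/-- The congruence on a commutative monoid `M` identifying `m` with `m * u`
for every unit `u`. -/
def unitCon (M : Type*) [CommMonoid M] : Con M :=
  conGen (fun a b => ∃ u : Mˣ, a = b * u)

/-- The sharpening `M̄ = M / M^×` of a commutative monoid `M`. -/
abbrev Sharpening (M : Type*) [CommMonoid M] := (unitCon M).Quotient

/-- The homomorphism of sharpenings induced by a homomorphism of commutative
monoids. -/
def sharpMap {M N : Type*} [CommMonoid M] [CommMonoid N] (f : M →* N) :
    Sharpening M →* Sharpening N :=
  Con.lift _ ((unitCon N).mk'.comp f) (by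
    apply Con.conGen_le.mpr
    rintro x y ⟨u, rfl⟩
    show (unitCon N).mk' (f (y * u)) = (unitCon N).mk' (f y)
    have h : (unitCon N) (f (y * u)) (f y) :=
      ConGen.Rel.of _ _ ⟨Units.map f u, by simp⟩
    exact (Con.eq _).mpr h)

/-- A commutative monoid is saturated if whenever `aⁿ = bⁿ * c` for some `n ≥ 1`
(i.e. `n` times the element `a - b` of the Grothendieck group lies in the monoid),
already `a = b * d` for some `d` (i.e. `a - b` lies in the monoid). -/
def IsSaturated (M : Type u) [CommMonoid M] : Prop :=
  ∀ (a b : M) (n : ℕ), 1 ≤ n → (∃ c, a ^ n = b ^ n * c) → ∃ d, a = b * d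

/-- `(S, i, j)` is a pushout of `Q ←f- P -g→ Q'` in the category of saturated
commutative monoids. -/
structure IsSatPushout {P Q Q' S : Type u}
    [CommMonoid P] [CommMonoid Q] [CommMonoid Q'] [CommMonoid S]
    (f : P →* Q) (g : P →* Q') (i : Q →* S) (j : Q' →* S) : Prop where
  sat : IsSaturated S
  comm : i.comp f = j.comp g
  universal : ∀ (T : Type u) [CommMonoid T], IsSaturated T →
    ∀ (u : Q →* T) (v : Q' →* T), u.comp f = v.comp g →
      ∃! w : S →* T, w.comp i = u ∧ w.comp j = v

theorem unitCon_iff {M : Type*} [CommMonoid M] {a b : M} :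
    unitCon M a b ↔ ∃ u : Mˣ, a = b * u := by
  refine ⟨fun h => ?_, fun h => ConGen.Rel.of _ _ h⟩
  induction h with
  | of x y h => exact h
  | refl _ => exact ⟨1, by simp⟩
  | symm _ ih =>
    obtain ⟨u, rfl⟩ := ih
    exact ⟨u⁻¹, by simp⟩
  | trans _ _ ih₁ ih₂ =>
    obtain ⟨u, rfl⟩ := ih₁
    obtain ⟨v, rfl⟩ := ih₂
    exact ⟨v * u, by rw [Units.val_mul, mul_assoc]⟩
  | mul _ _ ih₁ ih₂ =>
    obtain ⟨u, rfl⟩ := ih₁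
    obtain ⟨v, rfl⟩ := ih₂
    exact ⟨u * v, by rw [Units.val_mul, mul_mul_mul_comm]⟩

namespace Sharpening

variable {M T : Type*} [CommMonoid M] [CommMonoid T]

theorem mk'_eq_mk'_iff {a b : M} :
    (unitCon M).mk' a = (unitCon M).mk' b ↔ ∃ u : Mˣ, a = b * u :=
  (Con.eq _).trans unitCon_iff

theorem eq_one_of_isUnit {x : Sharpening M} (hx : IsUnit x) : x = 1 := by
  obtain ⟨a, rfl⟩ := Con.mk'_surjective x
  obtain ⟨y, hy⟩ := hx.exists_right_inv
  obtain ⟨b, rfl⟩ := Con.mk'_surjective y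
  obtain ⟨u, hu⟩ := mk'_eq_mk'_iff.mp (show (unitCon M).mk' (a * b) = (unitCon M).mk' 1 by
    rwa [map_mul, map_one])
  obtain ⟨v, rfl⟩ : IsUnit a := IsUnit.of_mul_eq_one (b * ↑u⁻¹) (by
    rw [← mul_assoc, hu, one_mul, Units.mul_inv])
  exact mk'_eq_mk'_iff.mpr ⟨v, (one_mul _).symm⟩

instance : Subsingleton (Sharpening M)ˣ :=
  ⟨fun x y => Units.ext <| (eq_one_of_isUnit x.isUnit).trans (eq_one_of_isUnit y.isUnit).symm⟩

theorem map_units_eq_one [Subsingleton Tˣ] (w : M →* T) (u : Mˣ) : w u = 1 :=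
  isUnit_iff_eq_one.mp (u.isUnit.map w)

def lift [Subsingleton Tˣ] (w : M →* T) : Sharpening M →* T :=
  Con.lift _ w <| Con.conGen_le.mpr <| by
    rintro x y ⟨u, rfl⟩
    show w (y * u) = w y
    rw [map_mul, map_units_eq_one, mul_one]

@[simp]
theorem lift_comp_mk' [Subsingleton Tˣ] (w : M →* T) : (lift w).comp (unitCon M).mk' = w :=
  Con.lift_comp_mk' _

end Sharpening

theorem IsSaturated.sharpening {M : Type u} [CommMonoid M] (hM : IsSaturated M) :
    IsSaturated (Sharpening M) := by
  intro x y n hn ⟨z, hz⟩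
  obtain ⟨a, rfl⟩ := Con.mk'_surjective x
  obtain ⟨b, rfl⟩ := Con.mk'_surjective y
  obtain ⟨c, rfl⟩ := Con.mk'_surjective z
  obtain ⟨u, hu⟩ := Sharpening.mk'_eq_mk'_iff.mp
    (show (unitCon M).mk' (a ^ n) = (unitCon M).mk' (b ^ n * c) by
      rw [map_mul, map_pow, map_pow]; exact hz)
  obtain ⟨d, rfl⟩ := hM a b n hn ⟨c * u, by rw [hu, mul_assoc]⟩
  exact ⟨(unitCon M).mk' d, map_mul _ _ _⟩

/-- Pushout in sharp saturated commutative monoids; sharpness of `S` is `Subsingleton Sˣ`. -/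
structure IsSharpSatPushout {P Q Q' S : Type u}
    [CommMonoid P] [CommMonoid Q] [CommMonoid Q'] [CommMonoid S]
    (f : P →* Q) (g : P →* Q') (i : Q →* S) (j : Q' →* S) : Prop where
  sat : IsSaturated S
  sharp : Subsingleton Sˣ
  comm : i.comp f = j.comp g
  universal : ∀ (T : Type u) [CommMonoid T] [Subsingleton Tˣ], IsSaturated T →
    ∀ (u : Q →* T) (v : Q' →* T), u.comp f = v.comp g →
      ∃! w : S →* T, w.comp i = u ∧ w.comp j = v

section Pushout

variable {P Q Q' S S' : Type u}
  [CommMonoid P] [CommMonoid Q] [CommMonoid Q'] [CommMonoid S] [CommMonoid S']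
  {f : P →* Q} {g : P →* Q'}

theorem IsSatPushout.sharpening {i : Q →* S} {j : Q' →* S} (hS : IsSatPushout f g i j) :
    IsSharpSatPushout f g ((unitCon S).mk'.comp i) ((unitCon S).mk'.comp j) where
  sat := hS.sat.sharpening
  sharp := inferInstance
  comm := by rw [MonoidHom.comp_assoc, MonoidHom.comp_assoc, hS.comm]
  universal T _ _ hT u v huv := by
    obtain ⟨w, ⟨hwi, hwj⟩, hw⟩ := hS.universal T hT u v huv
    refine ⟨Sharpening.lift w, ?_, fun w' hw' => Con.hom_ext ?_⟩
    · simp only [← MonoidHom.comp_assoc, Sharpening.lift_comp_mk', hwi, hwj, and_self]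
    · rw [Sharpening.lift_comp_mk']
      exact hw _ (by simpa only [MonoidHom.comp_assoc] using hw')

theorem IsSharpSatPushout.of_sharpMap {i : Sharpening Q →* S} {j : Sharpening Q' →* S}
    (hS : IsSharpSatPushout (sharpMap f) (sharpMap g) i j) :
    IsSharpSatPushout f g (i.comp (unitCon Q).mk') (j.comp (unitCon Q').mk') where
  sat := hS.sat
  sharp := hS.sharp
  comm := by
    ext p
    exact DFunLike.congr_fun hS.comm ((unitCon P).mk' p)
  universal T _ _ hT u v huv := by
    have hlift : (Sharpening.lift u).comp (sharpMap f) = (Sharpening.lift v).comp (sharpMap g) :=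
      Con.hom_ext (by ext p; exact DFunLike.congr_fun huv p)
    obtain ⟨w, ⟨hwi, hwj⟩, hw⟩ := hS.universal T hT _ _ hlift
    refine ⟨w, ?_, fun w' ⟨hw'i, hw'j⟩ => hw w' ⟨Con.hom_ext ?_, Con.hom_ext ?_⟩⟩
    · simp only [← MonoidHom.comp_assoc, hwi, hwj, Sharpening.lift_comp_mk', and_self]
    · rwa [Sharpening.lift_comp_mk']
    · rwa [Sharpening.lift_comp_mk']

namespace IsSharpSatPushout

variable {i : Q →* S} {j : Q' →* S}

theorem hom_ext (h : IsSharpSatPushout f g i j) {T : Type u} [CommMonoid T] [Subsingleton Tˣ]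
    (hT : IsSaturated T) {w₁ w₂ : S →* T} (hi : w₁.comp i = w₂.comp i)
    (hj : w₁.comp j = w₂.comp j) : w₁ = w₂ :=
  (h.universal T hT (w₁.comp i) (w₁.comp j) (by
    rw [MonoidHom.comp_assoc, MonoidHom.comp_assoc, h.comm])).unique ⟨rfl, rfl⟩ ⟨hi.symm, hj.symm⟩

theorem exists_mulEquiv {i' : Q →* S'} {j' : Q' →* S'} (h : IsSharpSatPushout f g i j)
    (h' : IsSharpSatPushout f g i' j') :
    ∃ e : S ≃* S', (e : S →* S').comp i = i' ∧ (e : S →* S').comp j = j' := by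
  have := h.sharp
  have := h'.sharp
  obtain ⟨φ, ⟨hφi, hφj⟩, -⟩ := h.universal S' h'.sat i' j' h'.comm
  obtain ⟨ψ, ⟨hψi, hψj⟩, -⟩ := h'.universal S h.sat i j h.comm
  have hψφ : ψ.comp φ = MonoidHom.id S := h.hom_ext h.sat
    (by rw [MonoidHom.comp_assoc, hφi, hψi, MonoidHom.id_comp])
    (by rw [MonoidHom.comp_assoc, hφj, hψj, MonoidHom.id_comp])
  have hφψ : φ.comp ψ = MonoidHom.id S' := h'.hom_ext h'.sat
    (by rw [MonoidHom.comp_assoc, hψi, hφi, MonoidHom.id_comp])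
    (by rw [MonoidHom.comp_assoc, hψj, hφj, MonoidHom.id_comp])
  exact ⟨φ.toMulEquiv ψ hψφ hφψ, hφi, hφj⟩

end IsSharpSatPushout

end Pushout

theorem stmt3_general {P Q Q' S S' : Type u}
    [CommMonoid P] [CommMonoid Q] [CommMonoid Q'] [CommMonoid S] [CommMonoid S']
    (f : P →* Q) (g : P →* Q')
    (i : Q →* S) (j : Q' →* S) (hS : IsSatPushout f g i j)
    (ib : Sharpening Q →* S') (jb : Sharpening Q' →* S')
    (hS' : IsSatPushout (sharpMap f) (sharpMap g) ib jb) :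
    ∃ e : Sharpening S ≃* Sharpening S',
      (∀ q : Q, e ((unitCon S).mk' (i q)) = (unitCon S').mk' (ib ((unitCon Q).mk' q))) ∧
      (∀ q' : Q', e ((unitCon S).mk' (j q')) =
        (unitCon S').mk' (jb ((unitCon Q').mk' q'))) := by
  obtain ⟨e, hei, hej⟩ := hS.sharpening.exists_mulEquiv hS'.sharpening.of_sharpMap
  exact ⟨e, DFunLike.congr_fun hei, DFunLike.congr_fun hej⟩

/-- Let `P → Q`, `P → Q'` be homomorphisms of saturated commutative cancellative
monoids, let `S` be the pushout `Q ⊕_P Q'` in saturated commutative monoids and `S'`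
the pushout `Q̄ ⊕_{P̄} Q̄'` of the sharpenings.  Then there is a canonical isomorphism
between the sharpening of `S` and the sharpening of `S'`, compatible with the
structure maps from `Q` and `Q'`. -/
theorem stmt3 {P Q Q' S S' : Type u}
    [CommMonoid P] [CommMonoid Q] [CommMonoid Q'] [CommMonoid S] [CommMonoid S']
    [IsCancelMul P] [IsCancelMul Q] [IsCancelMul Q']
    (hPsat : IsSaturated P) (hQsat : IsSaturated Q) (hQ'sat : IsSaturated Q')
    (f : P →* Q) (g : P →* Q')
    (i : Q →* S) (j : Q' →* S) (hS : IsSatPushout f g i j)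
    (ib : Sharpening Q →* S') (jb : Sharpening Q' →* S')
    (hS' : IsSatPushout (sharpMap f) (sharpMap g) ib jb) :
    ∃ e : Sharpening S ≃* Sharpening S',
      (∀ q : Q, e ((unitCon S).mk' (i q)) = (unitCon S').mk' (ib ((unitCon Q).mk' q))) ∧
      (∀ q' : Q', e ((unitCon S).mk' (j q')) =
        (unitCon S').mk' (jb ((unitCon Q').mk' q'))) :=
  stmt3_general f g i j hS ib jb hS'
end

section
/- Let f : C → D be a continuous and cocontinuous functor of sites that preserves Čech coverings. Assume: (i) every object Y of D admits a covering {Y_i → Y} such that all finite fiber products Y_{i₁} ×_Y ⋯ ×_Y Y_{iₙ} lie in the essential image of f; and (ii) the pushforward f_* : Shv(D, Set) → Shv(C, Set), (f_* G)(X) = G(f(X)), is an equivalence of categories. Then for every category V admitting all small limits, the pushforward f_* : Shv(D, V) → Shv(C, V) between categories of V-valued sheaves is an equivalence of categories. -/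
/-!
The Yoneda sections give a comparison `a_J (yoneda X) ⟶ f_* (a_L (yoneda (f X)))` of `Set`-valued
sheaves. Maps out of the source and out of the target into `f_* G` both correspond to sections
of `G` over `f X`, so when `f_*` is an equivalence this comparison is an isomorphism. Thus
`yoneda X ⟶ f^op ⋙ a_L (yoneda (f X))`, `g ↦ [f g]`, is `J`-locally bijective; as `f` is
cocontinuous, the sheafification map of `D` stays locally injective after restriction along `f`,
so `g ↦ f g` is already `J`-locally bijective; pushing these covers forward, `f` is locally full
and locally faithful.
Covers in `C` are detected in `D`: the sheaf of `J`-closed sieves is of the form `f_* G`, hence a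
sheaf for the topology induced by `L`. So `(C, J)` is a dense subsite of `(D, L)`, and the
comparison lemma gives the equivalence for every complete `V`.
-/

open CategoryTheory Limits Opposite

universe u v' u'

namespace CategoryTheory

lemma Functor.isIso_of_bijective_comp_map {A B : Type*} [Category* A] [Category* B]
    (F : B ⥤ A) [F.IsEquivalence] {a : A} {b : B} (θ : a ⟶ F.obj b)
    (h : ∀ c, Function.Bijective fun β : b ⟶ c => θ ≫ F.map β) : IsIso θ := by
  let adj : F.inv ⊣ F := F.asEquivalence.symm.toAdjunction
  have : IsIso ((adj.homEquiv a b).symm θ) := by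
    refine isIso_of_coyoneda_map_bijective _ fun c => ?_
    convert (adj.homEquiv a c).symm.bijective.comp (h c) using 1
    ext β
    simp [← adj.homEquiv_naturality_right_symm]
  rw [← (adj.homEquiv a b).apply_symm_apply θ, adj.homEquiv_unit]
  infer_instance

lemma yonedaEquiv_yonedaMap_comp_whiskerLeft {C D : Type*} [Category.{v'} C] [Category.{v'} D]
    (f : C ⥤ D) (X : C) {P : Dᵒᵖ ⥤ Type v'} (β : yoneda.obj (f.obj X) ⟶ P) :
    yonedaEquiv (yonedaMap f X ≫ Functor.whiskerLeft f.op β) = yonedaEquiv β := by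
  rw [yonedaEquiv_apply, yonedaEquiv_apply, ← f.map_id]
  rfl

section SheafifiedYoneda

variable {C : Type*} [Category.{v'} C] (J : GrothendieckTopology C) [HasWeakSheafify J (Type v')]

noncomputable def sheafifiedYonedaEquiv (X : C) (P : Sheaf J (Type v')) :
    ((presheafToSheaf J (Type v')).obj (yoneda.obj X) ⟶ P) ≃ P.obj.obj (op X) :=
  ((sheafificationAdjunction J (Type v')).homEquiv _ _).trans yonedaEquiv

lemma sheafifiedYonedaEquiv_apply (X : C) (P : Sheaf J (Type v'))
    (α : (presheafToSheaf J (Type v')).obj (yoneda.obj X) ⟶ P) :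
    sheafifiedYonedaEquiv J X P α = yonedaEquiv (toSheafify J (yoneda.obj X) ≫ α.hom) := by
  simp only [sheafifiedYonedaEquiv, Equiv.trans_apply, Adjunction.homEquiv_unit]
  rfl

end SheafifiedYoneda

namespace Functor

lemma isCoverDense_of_exists_covering {C D : Type*} [Category* C] [Category* D] (f : C ⥤ D)
    (L : GrothendieckTopology D)
    (h : ∀ Y : D, ∃ S : Sieve Y, S ∈ L Y ∧
      ∀ {Z : D} (g : Z ⟶ Y), S g → ∃ X : C, Nonempty (f.obj X ≅ Z)) :
    f.IsCoverDense L where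
  is_cover Y := by
    obtain ⟨S, hS, hSf⟩ := h Y
    refine L.superset_covering (fun Z g hg => ?_) hS
    obtain ⟨X, ⟨e⟩⟩ := hSf g hg
    exact ⟨⟨X, e.inv, e.hom ≫ g, by simp⟩⟩

variable {C D : Type u} [SmallCategory C] [SmallCategory D]
  (J : GrothendieckTopology C) (L : GrothendieckTopology D) (f : C ⥤ D) [f.IsContinuous J L]

noncomputable def sheafifiedYonedaMap (X : C) :
    (presheafToSheaf J (Type u)).obj (yoneda.obj X) ⟶
      (f.sheafPushforwardContinuous (Type u) J L).obj
        ((presheafToSheaf L (Type u)).obj (yoneda.obj (f.obj X))) :=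
  ((sheafificationAdjunction J (Type u)).homEquiv _ _).symm
    (yonedaMap f X ≫ whiskerLeft f.op (toSheafify L (yoneda.obj (f.obj X))))

lemma toSheafify_comp_sheafifiedYonedaMap_hom (X : C) :
    toSheafify J (yoneda.obj X) ≫ (f.sheafifiedYonedaMap J L X).hom =
      yonedaMap f X ≫ whiskerLeft f.op (toSheafify L (yoneda.obj (f.obj X))) :=
  ((sheafificationAdjunction J (Type u)).homEquiv_unit _ _ _).symm.trans
    (Equiv.apply_symm_apply _ _)

lemma sheafifiedYonedaEquiv_sheafifiedYonedaMap_comp_map (X : C) (G : Sheaf L (Type u))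
    (α : (presheafToSheaf L (Type u)).obj (yoneda.obj (f.obj X)) ⟶ G) :
    sheafifiedYonedaEquiv J X _
        (f.sheafifiedYonedaMap J L X ≫ (f.sheafPushforwardContinuous (Type u) J L).map α) =
      sheafifiedYonedaEquiv L (f.obj X) G α := by
  rw [sheafifiedYonedaEquiv_apply, sheafifiedYonedaEquiv_apply,
    ← yonedaEquiv_yonedaMap_comp_whiskerLeft f X]
  congr 1
  exact (reassoc_of% toSheafify_comp_sheafifiedYonedaMap_hom J L f X) (whiskerLeft f.op α.hom)

lemma isIso_sheafifiedYonedaMap [(f.sheafPushforwardContinuous (Type u) J L).IsEquivalence]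
    (X : C) : IsIso (f.sheafifiedYonedaMap J L X) := by
  refine isIso_of_bijective_comp_map _ _ fun G => ?_
  rw [← Function.Bijective.of_comp_iff' (sheafifiedYonedaEquiv J X _).bijective]
  have h : sheafifiedYonedaEquiv J X _ ∘ (fun α => f.sheafifiedYonedaMap J L X ≫
      (f.sheafPushforwardContinuous (Type u) J L).map α) = sheafifiedYonedaEquiv L (f.obj X) G :=
    funext (sheafifiedYonedaEquiv_sheafifiedYonedaMap_comp_map J L f X G)
  exact h ▸ (sheafifiedYonedaEquiv L (f.obj X) G).bijective

lemma isLocallySurjective_yonedaMap [f.IsCocontinuous J L] (X : C)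
    [IsIso (f.sheafifiedYonedaMap J L X)] : Presheaf.IsLocallySurjective J (yonedaMap f X) := by
  have := Sheaf.isLocallySurjective_of_iso (f.sheafifiedYonedaMap J L X)
  have : Presheaf.IsLocallySurjective J
      (yonedaMap f X ≫ whiskerLeft f.op (toSheafify L (yoneda.obj (f.obj X)))) := by
    rw [← toSheafify_comp_sheafifiedYonedaMap_hom J L f X]
    exact Presheaf.isLocallySurjective_comp J _ (f.sheafifiedYonedaMap J L X).hom
  have := Presheaf.isLocallyInjective_whisker J L f (toSheafify L (yoneda.obj (f.obj X)))
  exact Presheaf.isLocallySurjective_of_isLocallySurjective_of_isLocallyInjective J _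
    (whiskerLeft f.op (toSheafify L (yoneda.obj (f.obj X))))

lemma isLocallyInjective_yonedaMap (X : C) [IsIso (f.sheafifiedYonedaMap J L X)] :
    Presheaf.IsLocallyInjective J (yonedaMap f X) := by
  have := Sheaf.isLocallyInjective_of_iso (f.sheafifiedYonedaMap J L X)
  have : Presheaf.IsLocallyInjective J
      (yonedaMap f X ≫ whiskerLeft f.op (toSheafify L (yoneda.obj (f.obj X)))) := by
    rw [← toSheafify_comp_sheafifiedYonedaMap_hom J L f X]
    exact Presheaf.isLocallyInjective_comp J _ (f.sheafifiedYonedaMap J L X).hom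
  exact Presheaf.isLocallyInjective_of_isLocallyInjective J _
    (whiskerLeft f.op (toSheafify L (yoneda.obj (f.obj X))))

section
variable [(f.sheafPushforwardContinuous (Type u) J L).IsEquivalence]

lemma isLocallyFull_of_isEquivalence [f.IsCocontinuous J L] (hcover : CoverPreserving J L f) :
    f.IsLocallyFull L where
  functorPushforward_imageSieve_mem {_ V} u := by
    have := isIso_sheafifiedYonedaMap J L f V
    have := isLocallySurjective_yonedaMap J L f V
    exact hcover.cover_preserve (Presheaf.imageSieve_mem J (yonedaMap f V) u)

lemma isLocallyFaithful_of_isEquivalence (hcover : CoverPreserving J L f) :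
    f.IsLocallyFaithful L where
  functorPushforward_equalizer_mem {_ V} g₁ g₂ e := by
    have := isIso_sheafifiedYonedaMap J L f V
    have := isLocallyInjective_yonedaMap J L f V
    exact hcover.cover_preserve (Presheaf.equalizerSieve_mem J (yonedaMap f V) g₁ g₂ e)

lemma inducedTopology_eq_of_isEquivalence : f.inducedTopology L = J := by
  refine le_antisymm ?_ (le_inducedTopology_iff.2 inferInstance)
  apply le_topology_of_closedSieves_isSheaf
  let P : Sheaf J (Type u) :=
    ⟨(closedSieves J).toFunctor, (isSheaf_iff_isSheaf_of_type _ _).2 (classifier_isSheaf J)⟩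
  let F := f.sheafPushforwardContinuous (Type u) J L
  exact Presieve.isSheaf_iso _ ((sheafToPresheaf J _).mapIso (F.objObjPreimageIso P))
    (f.op_comp_isSheaf_of_types _ L (F.objPreimage P))

end

end Functor

end CategoryTheory

theorem stmt7_general {C D : Type u} [SmallCategory C] [SmallCategory D]
    (J : GrothendieckTopology C) (L : GrothendieckTopology D) (f : C ⥤ D)
    [Functor.IsContinuous f J L]
    [f.IsCocontinuous J L]
    (hcover : CoverPreserving J L f)
    (hgen : ∀ Y : D, ∃ S : Sieve Y, S ∈ L Y ∧
      (∀ {Z : D} (g : Z ⟶ Y), S g → ∃ X : C, Nonempty (f.obj X ≅ Z)) ∧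
      (∀ {Z Z' : D} (g : Z ⟶ Y) (g' : Z' ⟶ Y), S g → S g' →
        ∃ (W : D) (p : W ⟶ Z) (q : W ⟶ Z'), IsPullback p q g g' ∧
          ∃ X : C, Nonempty (f.obj X ≅ W)))
    (heq : (f.sheafPushforwardContinuous (Type u) J L).IsEquivalence)
    (V : Type u') [Category.{v'} V] [HasLimitsOfSize.{u, u} V] :
    (f.sheafPushforwardContinuous V J L).IsEquivalence := by
  have : f.IsCoverDense L :=
    f.isCoverDense_of_exists_covering L fun Y => (hgen Y).imp fun _ hS => ⟨hS.1, hS.2.1⟩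
  have : f.IsLocallyFull L := f.isLocallyFull_of_isEquivalence J L hcover
  have : f.IsLocallyFaithful L := f.isLocallyFaithful_of_isEquivalence J L hcover
  have : f.IsDenseSubsite J L := f.inducedTopology_eq_of_isEquivalence J L ▸ inferInstance
  infer_instance

/-- Let `f : C ⥤ D` be a continuous and cocontinuous functor of sites which preserves
Čech coverings (coverings map to coverings and pairwise fiber products of covering
morphisms are preserved).  Assume that every object of `D` admits a covering whose
members, together with their fiber products, lie in the essential image of `f`, and
that the pushforward `f_* : Shv(D, Set) → Shv(C, Set)` is an equivalence.  Then for
every category `V` admitting all small limits, the pushforward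
`f_* : Shv(D, V) → Shv(C, V)` is an equivalence of categories. -/
theorem stmt7 {C D : Type u} [SmallCategory C] [SmallCategory D] [HasPullbacks C]
    (J : GrothendieckTopology C) (L : GrothendieckTopology D) (f : C ⥤ D)
    [Functor.IsContinuous f J L]
    [f.IsCocontinuous J L]
    (hcover : CoverPreserving J L f)
    (hpb : ∀ {X : C} (S : Sieve X), S ∈ J X → ∀ {Y Z : C} (g : Y ⟶ X) (h : Z ⟶ X),
      S g → S h →
      IsPullback (f.map (pullback.fst g h)) (f.map (pullback.snd g h))
        (f.map g) (f.map h))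
    (hgen : ∀ Y : D, ∃ S : Sieve Y, S ∈ L Y ∧
      (∀ {Z : D} (g : Z ⟶ Y), S g → ∃ X : C, Nonempty (f.obj X ≅ Z)) ∧
      (∀ {Z Z' : D} (g : Z ⟶ Y) (g' : Z' ⟶ Y), S g → S g' →
        ∃ (W : D) (p : W ⟶ Z) (q : W ⟶ Z'), IsPullback p q g g' ∧
          ∃ X : C, Nonempty (f.obj X ≅ W)))
    (heq : (f.sheafPushforwardContinuous (Type u) J L).IsEquivalence)
    (V : Type u') [Category.{v'} V] [HasLimitsOfSize.{u, u} V] :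
    (f.sheafPushforwardContinuous V J L).IsEquivalence :=
  stmt7_general J L f hcover hgen heq V
end

section
/- Let C and D be categories, F, H : D → C functors, G : C → D a right adjoint of F, and K : C → D a left adjoint of H. Let p : F ⟶ H be a natural transformation. If the whiskered natural transformations p ∘ G : F∘G ⟶ H∘G and p ∘ K : F∘K ⟶ H∘K (both between functors C → C) are natural isomorphisms, then p is a natural isomorphism. -/
/-!
With `η, ε` the unit and counit of `F ⊣ G`, the composite
`H X ⟶ H (G (F X)) ≅ F (G (F X)) ⟶ F X` built from `H.map (η X)`, the inverse of `(p ∘ G)_{F X}`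
and `ε (F X)` is a retraction of `p X`, by naturality of `p` and a triangle identity. Dually,
`K ⊣ H` and the inverse of `(p ∘ K)_{H X}` give a section of `p X`. A morphism with both a
retraction and a section is an isomorphism.
-/

open CategoryTheory

namespace CategoryTheory.NatTrans

variable {C D : Type*} [Category C] [Category D] {F H : D ⥤ C}

lemma isSplitMono_app_of_adjunction {G : C ⥤ D} (adj : F ⊣ G) (p : F ⟶ H) (X : D)
    [IsIso (p.app (G.obj (F.obj X)))] : IsSplitMono (p.app X) :=
  IsSplitMono.mk' <| SplitMono.mk
    (H.map (adj.unit.app X) ≫ inv (p.app (G.obj (F.obj X))) ≫ adj.counit.app (F.obj X)) <| by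
      rw [← Category.assoc, ← p.naturality]
      simp

lemma isSplitEpi_app_of_adjunction {K : C ⥤ D} (adj : K ⊣ H) (p : F ⟶ H) (X : D)
    [IsIso (p.app (K.obj (H.obj X)))] : IsSplitEpi (p.app X) :=
  IsSplitEpi.mk' <| SplitEpi.mk
    (adj.unit.app (H.obj X) ≫ inv (p.app (K.obj (H.obj X))) ≫ F.map (adj.counit.app X)) <| by
      rw [Category.assoc, Category.assoc, p.naturality]
      simp

end CategoryTheory.NatTrans

/-- Let `F, H : D ⥤ C`, let `G` be a right adjoint of `F` and `K` a left adjoint of `H`,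
and let `p : F ⟶ H` be a natural transformation.  If the whiskerings `p ∘ G` and `p ∘ K`
are natural isomorphisms, then so is `p`. -/
theorem stmt8 {C D : Type*} [Category C] [Category D]
    (F H : D ⥤ C) (G K : C ⥤ D) (adj₁ : F ⊣ G) (adj₂ : K ⊣ H) (p : F ⟶ H)
    (h₁ : IsIso (Functor.whiskerLeft G p)) (h₂ : IsIso (Functor.whiskerLeft K p)) :
    IsIso p := by
  have (X : D) : IsIso (p.app X) := by
    have : IsIso (p.app (G.obj (F.obj X))) :=
      inferInstanceAs (IsIso ((Functor.whiskerLeft G p).app (F.obj X)))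
    have : IsIso (p.app (K.obj (H.obj X))) :=
      inferInstanceAs (IsIso ((Functor.whiskerLeft K p).app (H.obj X)))
    have := NatTrans.isSplitMono_app_of_adjunction adj₁ p X
    have := NatTrans.isSplitEpi_app_of_adjunction adj₂ p X
    exact isIso_of_epi_of_isSplitMono (p.app X)
  exact NatIso.isIso_of_isIso_app p
end

section
/- Let A, Z, U be cocomplete categories, with Z and U having zero objects. Let i_* : Z → A, i^* : A → Z, and j^* : A → U be functors such that: i^* and j^* preserve small colimits; there is a natural isomorphism i^* ∘ i_* ≅ id_Z; j^* ∘ i_* is isomorphic to the constant functor at the zero object of U; and the pair (i^*, j^*) is jointly conservative (a morphism α in A is an isomorphism whenever i^*(α) and j^*(α) are isomorphisms). Then i_* preserves small colimits. -/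
/-!
Let `L` be the colimit of `F ⋙ i_*` and `φ : L ⟶ i_* (colim F)` the comparison map; by joint
conservativity it suffices that `i^* φ` and `j^* φ` are isomorphisms. As `i_* ⋙ i^* ≅ 𝟭`, both
`i^* L` and `i^* (i_* (colim F))` are colimits of `F`; and `j^* φ` is a map between zero objects,
since `j^*` kills every `i_* z`, hence also their colimit `L`.

The diagrams are indexed by the morphism universe of `A`, while `i^*` and `j^*` only preserve
colimits indexed by the morphism universes of `Z` and `U`. Freyd's coproduct argument bridges the
gap: if some type of the first universe is not small in the second, a functor out of `A` must
identify all parallel morphisms, and then both claims hold for trivial reasons (for `j^*`, because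
`i_* 0` is initial and `L` maps to it).
-/

open CategoryTheory Limits

universe w v u u' u₁ v₁ u₂ v₂ u₃ v₃

namespace CategoryTheory

section Freyd

variable {C : Type u} [Category.{w} C] {D : Type u'} [Category.{v} D]

theorem Functor.small_of_map_ne (G : C ⥤ D) (S : Type*) [HasCoproductsOfShape S C]
    {X Y : C} {f g : X ⟶ Y} (hfg : G.map f ≠ G.map g) : Small.{v} S := by
  classical
  refine small_of_injective (f := fun s : S ↦
    G.map (Limits.Sigma.desc fun t : S ↦ if t = s then f else g : (∐ fun _ : S ↦ X) ⟶ Y)) ?_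
  intro s s' h
  by_contra hne
  apply hfg
  simpa [← G.map_comp, hne] using congrArg (G.map (Limits.Sigma.ι (fun _ : S ↦ X) s) ≫ ·) h

theorem Functor.preservesColimitsOfShape_or_map_eq [HasCoproducts.{w} C] (G : C ⥤ D)
    [PreservesColimitsOfSize.{v, v} G] (J : Type w) [Category.{w} J] :
    PreservesColimitsOfShape J G ∨ ∀ {X Y : C} (f g : X ⟶ Y), G.map f = G.map g := by
  by_cases hsmall : ∀ α : Type w, Small.{v} α
  · have : EssentiallySmall.{v} J :=
      (essentiallySmall_iff J).2 ⟨hsmall _, ⟨fun _ _ ↦ hsmall _⟩⟩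
    exact .inl (preservesColimitsOfShape_of_equiv (equivSmallModel J).symm G)
  · push Not at hsmall
    obtain ⟨S, hS⟩ := hsmall
    exact .inr fun f g ↦ by_contra fun hfg ↦ hS (G.small_of_map_ne S hfg)

end Freyd

theorem isIso_of_forall_eq {C : Type u} [Category.{w} C] [HasZeroObject C]
    (h : ∀ {X Y : C} (f g : X ⟶ Y), f = g) {X Y : C} (f : X ⟶ Y) : IsIso f :=
  ⟨(isZero_zero C).from_ Y ≫ (isZero_zero C).to_ X, h _ _, h _ _⟩

section Localization

open ZeroObject

variable {A : Type u₁} {Z : Type u₂} {U : Type u₃}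
  [Category.{v₁} A] [Category.{v₂} Z] [Category.{v₃} U]
  [HasZeroObject Z] [HasZeroObject U]
  {istar : Z ⥤ A} {ipull : A ⥤ Z} {jpull : A ⥤ U}

noncomputable def isInitialObjZero [HasInitial A]
    [PreservesColimits ipull] [PreservesColimits jpull]
    (e : istar ⋙ ipull ≅ 𝟭 Z) (hz : ∀ z : Z, IsZero (jpull.obj (istar.obj z)))
    (hcons : ∀ {X Y : A} (α : X ⟶ Y), IsIso (ipull.map α) → IsIso (jpull.map α) → IsIso α) :
    IsInitial (istar.obj 0) := by
  have : PreservesColimitsOfSize.{0, 0} ipull := preservesSmallestColimits_of_preservesColimits _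
  have : PreservesColimitsOfSize.{0, 0} jpull := preservesSmallestColimits_of_preservesColimits _
  have : IsIso (initial.to (istar.obj 0)) := hcons _
    (isIso_of_isInitial (initialIsInitial.isInitialObj ipull _)
      ((isZero_zero Z).of_iso (e.app 0)).isInitial _)
    (isIso_of_isInitial (initialIsInitial.isInitialObj jpull _) (hz 0).isInitial _)
  exact initialIsInitial.ofIso (asIso (initial.to _))

theorem isIso_map_desc_of_comp_iso_id [HasCoproducts.{v₁} A] [PreservesColimits ipull]
    (e : istar ⋙ ipull ≅ 𝟭 Z) {J : Type v₁} [Category.{v₁} J] {F : J ⥤ Z} {c : Cocone F}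
    (hc : IsColimit c) {t : Cocone (F ⋙ istar)} (ht : IsColimit t) :
    IsIso (ipull.map (ht.desc (istar.mapCocone c))) := by
  obtain hJ | hthin := ipull.preservesColimitsOfShape_or_map_eq J
  · have : PreservesColimit F (istar ⋙ ipull) := preservesColimit_of_natIso F e.symm
    rw [← preserves_desc_mapCocone]
    let hL := isColimitOfPreserves ipull ht
    let m := hL.descCoconeMorphism (ipull.mapCocone (istar.mapCocone c))
    have : IsIso m := IsColimit.hom_isIso hL (isColimitOfPreserves (istar ⋙ ipull) hc) m
    exact (Cocone.forget _).map_isIso m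
  · have : (istar ⋙ ipull).Faithful := .of_iso e.symm
    exact isIso_of_forall_eq (fun f g ↦ (istar ⋙ ipull).map_injective (hthin _ _)) _

theorem isZero_obj_pt_of_isColimit [HasCoproducts.{v₁} A] [PreservesColimits jpull]
    (hz : ∀ z : Z, IsZero (jpull.obj (istar.obj z))) (h0 : IsInitial (istar.obj 0))
    {J : Type v₁} [Category.{v₁} J] {F : J ⥤ Z} (c : Cocone F) {t : Cocone (F ⋙ istar)}
    (ht : IsColimit t) : IsZero (jpull.obj t.pt) := by
  obtain hJ | hthin := jpull.preservesColimitsOfShape_or_map_eq J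
  · let _ : HasZeroMorphisms U := HasZeroObject.zeroMorphismsOfZeroObject
    exact (isColimitOfPreserves jpull ht).isZero_pt (Functor.isZero _ fun j ↦ hz (F.obj j))
  · let r : t.pt ⟶ istar.obj 0 :=
      ht.desc (istar.mapCocone c) ≫ istar.map ((isZero_zero Z).from_ _)
    refine (hz 0).of_iso ⟨jpull.map r, jpull.map (h0.to _), ?_, ?_⟩ <;>
      rw [← jpull.map_comp, ← jpull.map_id] <;> exact hthin _ _

end Localization

end CategoryTheory

theorem stmt9_general {A Z U : Type*} [Category A] [Category Z] [Category U]
    [HasColimits A]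
    [HasZeroObject Z] [HasZeroObject U]
    (istar : Z ⥤ A) (ipull : A ⥤ Z) (jpull : A ⥤ U)
    [PreservesColimits ipull] [PreservesColimits jpull]
    (e : istar ⋙ ipull ≅ 𝟭 Z)
    (hz : ∀ z : Z, IsZero (jpull.obj (istar.obj z)))
    (hcons : ∀ {X Y : A} (α : X ⟶ Y), IsIso (ipull.map α) → IsIso (jpull.map α) →
      IsIso α) :
    PreservesColimits istar := by
  refine ⟨fun {J} _ ↦ ⟨fun {F} ↦ ⟨fun {c} hc ↦ ?_⟩⟩⟩
  let ht := colimit.isColimit (F ⋙ istar)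
  have hφ : IsIso (ht.desc (istar.mapCocone c)) := hcons _
    (isIso_map_desc_of_comp_iso_id e hc ht)
    ((isZero_obj_pt_of_isColimit hz (isInitialObjZero e hz hcons) c ht).isIso (hz c.pt) _)
  exact ⟨IsColimit.ofPointIso ht⟩

/-- Localization-type data: cocomplete categories `A`, `Z`, `U` with zero objects in
`Z` and `U`, colimit-preserving functors `i^* : A ⥤ Z`, `j^* : A ⥤ U`, a functor
`i_* : Z ⥤ A` with `i^* ∘ i_* ≅ id`, `j^* ∘ i_*` pointwise zero, and `(i^*, j^*)`
jointly conservative.  Then `i_*` preserves small colimits. -/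
theorem stmt9 {A Z U : Type*} [Category A] [Category Z] [Category U]
    [HasColimits A] [HasColimits Z] [HasColimits U]
    [HasZeroObject Z] [HasZeroObject U]
    (istar : Z ⥤ A) (ipull : A ⥤ Z) (jpull : A ⥤ U)
    [PreservesColimits ipull] [PreservesColimits jpull]
    (e : istar ⋙ ipull ≅ 𝟭 Z)
    (hz : ∀ z : Z, IsZero (jpull.obj (istar.obj z)))
    (hcons : ∀ {X Y : A} (α : X ⟶ Y), IsIso (ipull.map α) → IsIso (jpull.map α) →
      IsIso α) :
    PreservesColimits istar :=
  stmt9_general istar ipull jpull e hz hcons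
end

section
/- Let P be a cd-structure on a category C with an initial object, and equip C with the topology generated by P (for each square Q in P with vertical map f : X → S and horizontal map g : S' → S, the sieve generated by {f, g} is declared covering). Assume every square Q in P, with corners X' → X, X' → S', S' → S, X → S, satisfies: (i) Q is cartesian; (ii) g : S' → S is a monomorphism; (iii) for every morphism U → S in C the base change Q ×_S U exists and belongs to P; (iv) the square with horizontal maps X' → X, X' ×_{S'} X' → X ×_S X and vertical diagonal maps belongs to P. Then a presheaf of sets F : C^op → Set is a sheaf for this topology if and only if F is excisive, i.e., F(Q) is a cartesian (pullback) square of sets for every Q ∈ P. -/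
open CategoryTheory Limits

universe w v u

variable {C : Type u} [Category.{v} C]

/-- A commutative square in `C`, with vertical maps `X' → S'`, `X → S` and
horizontal maps `X' → X`, `S' → S`.  A cd-structure is a set of such squares. -/
structure CDSquare (C : Type u) [Category.{v} C] where
  X' : C
  X : C
  S' : C
  S : C
  top : X' ⟶ X
  left : X' ⟶ S'
  right : X ⟶ S
  bottom : S' ⟶ S
  comm : top ≫ right = left ≫ bottom

namespace CDSquare

/-- The covering family `{X → S, S' → S}` associated with a square. -/
def coverPresieve (Q : CDSquare C) : Presieve Q.S :=
  Presieve.ofArrows (fun b : Bool => bif b then Q.X else Q.S')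
    (fun b => Bool.rec (motive := fun b => (bif b then Q.X else Q.S') ⟶ Q.S)
      Q.bottom Q.right b)

/-- The square of sets `F(Q)` is cartesian: for compatible `x ∈ F(X)`, `y ∈ F(S')`
there is a unique `s ∈ F(S)` restricting to both. -/
def FCartesian (Q : CDSquare C) (F : Cᵒᵖ ⥤ Type w) : Prop :=
  ∀ (x : F.obj (Opposite.op Q.X)) (y : F.obj (Opposite.op Q.S')),
    F.map Q.top.op x = F.map Q.left.op y →
      ∃! s : F.obj (Opposite.op Q.S),
        F.map Q.right.op s = x ∧ F.map Q.bottom.op s = y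

end CDSquare

/-- The Grothendieck topology generated by a cd-structure: the smallest topology for
which, for every square of the cd-structure, the sieve generated by the two maps
`X → S` and `S' → S` is covering. -/
def cdTopology (P : Set (CDSquare C)) : GrothendieckTopology C :=
  sInf {J | ∀ Q ∈ P, Sieve.generate Q.coverPresieve ∈ J Q.S}

/-- `Q'` is a base change of the square `Q` along `u : U ⟶ Q.S`: its corners are the
fiber products of the corners of `Q` with `U` over `S`. -/
def IsCDBaseChange (Q Q' : CDSquare C) {U : C} (u : U ⟶ Q.S) : Prop :=
  ∃ (h : Q'.S = U) (pX : Q'.X ⟶ Q.X) (pS' : Q'.S' ⟶ Q.S') (pX' : Q'.X' ⟶ Q.X'),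
    IsPullback pX (Q'.right ≫ eqToHom h) Q.right u ∧
    IsPullback pS' (Q'.bottom ≫ eqToHom h) Q.bottom u ∧
    IsPullback pX' Q'.top Q.top pX ∧
    pX' ≫ Q.left = Q'.left ≫ pS'

/-- Condition (iv): the "diagonal square" of `Q`, with horizontal maps `X' → X` and
`X' ×_{S'} X' → X ×_S X` and vertical maps the diagonals, exists and belongs to `P`. -/
def HasDiagonalSquare (P : Set (CDSquare C)) (Q : CDSquare C) : Prop :=
  ∃ (W W' : C) (p₁ p₂ : W ⟶ Q.X) (q₁ q₂ : W' ⟶ Q.X')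
    (_ : IsPullback p₁ p₂ Q.right Q.right) (_ : IsPullback q₁ q₂ Q.left Q.left)
    (d : Q.X ⟶ W) (d' : Q.X' ⟶ W') (m : W' ⟶ W)
    (hcomm : Q.top ≫ d = d' ≫ m),
    d ≫ p₁ = 𝟙 Q.X ∧ d ≫ p₂ = 𝟙 Q.X ∧
    d' ≫ q₁ = 𝟙 Q.X' ∧ d' ≫ q₂ = 𝟙 Q.X' ∧
    m ≫ p₁ = q₁ ≫ Q.top ∧ m ≫ p₂ = q₂ ≫ Q.top ∧
    (⟨Q.X', Q.X, W', W, Q.top, d', d, m, hcomm⟩ : CDSquare C) ∈ P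

/-!
Because base changes of squares of `P` lie in `P`, the covering families `{X → S, S' → S}`
form a coverage, so a presheaf is a sheaf as soon as it is a sheaf for each such family.
For one family, the sheaf condition asks for a unique glueing of every matching pair
`(x, y)`, which is the cartesianness of `F(Q)` once matching reduces to `x|X' = y|X'`:
on pairs of maps into `S'` this is monicity of `S' → S`, on mixed pairs cartesianness of `Q`,
and on pairs of maps into `X` it follows from separatedness along the diagonal square.
-/

open Opposite

namespace CDSquare

variable {F : Cᵒᵖ ⥤ Type w}

def IsCompatiblePair (Q : CDSquare C) (F : Cᵒᵖ ⥤ Type w) (x : F.obj (op Q.X))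
    (y : F.obj (op Q.S')) : Prop :=
  (∀ {Z : C} (g g' : Z ⟶ Q.X), g ≫ Q.right = g' ≫ Q.right → F.map g.op x = F.map g'.op x) ∧
  (∀ {Z : C} (h h' : Z ⟶ Q.S'), h ≫ Q.bottom = h' ≫ Q.bottom → F.map h.op y = F.map h'.op y) ∧
  (∀ {Z : C} (g : Z ⟶ Q.X) (h : Z ⟶ Q.S'), g ≫ Q.right = h ≫ Q.bottom →
    F.map g.op x = F.map h.op y)

theorem isSheafFor_coverPresieve_iff (Q : CDSquare C) :
    Q.coverPresieve.IsSheafFor F ↔ ∀ x y, Q.IsCompatiblePair F x y →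
      ∃! s : F.obj (op Q.S), F.map Q.right.op s = x ∧ F.map Q.bottom.op s = y := by
  rw [coverPresieve, Presieve.isSheafFor_arrows_iff]
  constructor
  · rintro hF x y ⟨hx, hy, hxy⟩
    obtain ⟨s, hs, hs_unique⟩ :=
      hF (fun b => Bool.rec (motive := fun b => F.obj (op (bif b then Q.X else Q.S'))) y x b)
        (by
          rintro (_ | _) (_ | _) Z gi gj hij
          exacts [hy gi gj hij, (hxy gj gi hij.symm).symm, hxy gi gj hij, hx gi gj hij])
    exact ⟨s, ⟨hs true, hs false⟩, fun t ht => hs_unique t (Bool.rec ht.2 ht.1)⟩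
  · intro hF z hz
    obtain ⟨s, hs, hs_unique⟩ := hF (z true) (z false)
      ⟨hz true true _, hz false false _, hz true false _⟩
    exact ⟨s, Bool.rec hs.2 hs.1, fun t ht => hs_unique t ⟨ht true, ht false⟩⟩

theorem isCompatiblePair_map (Q : CDSquare C) (s : F.obj (op Q.S)) :
    Q.IsCompatiblePair F (F.map Q.right.op s) (F.map Q.bottom.op s) := by
  refine ⟨fun g g' h => ?_, fun g g' h => ?_, fun g g' h => ?_⟩ <;>
    simp only [← Functor.map_comp_apply, ← op_comp, h]

theorem ext_of_isSheafFor {Q : CDSquare C} (hF : Q.coverPresieve.IsSheafFor F)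
    {a b : F.obj (op Q.S)} (hright : F.map Q.right.op a = F.map Q.right.op b)
    (hbottom : F.map Q.bottom.op a = F.map Q.bottom.op b) : a = b :=
  ((Q.isSheafFor_coverPresieve_iff.1 hF _ _ (Q.isCompatiblePair_map a)).unique
    ⟨rfl, rfl⟩ ⟨hright.symm, hbottom.symm⟩)

theorem isSheafFor_coverPresieve_of_fCartesian {Q : CDSquare C} (hF : Q.FCartesian F) :
    Q.coverPresieve.IsSheafFor F :=
  Q.isSheafFor_coverPresieve_iff.2 fun x y hxy => hF x y (hxy.2.2 Q.top Q.left Q.comm)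

theorem fCartesian_of_isSheafFor {Q : CDSquare C} (hF : Q.coverPresieve.IsSheafFor F)
    (hQ : IsPullback Q.top Q.left Q.right Q.bottom) [Mono Q.bottom]
    (hright : ∀ x y, F.map Q.top.op x = F.map Q.left.op y → ∀ {Z : C} (g g' : Z ⟶ Q.X),
      g ≫ Q.right = g' ≫ Q.right → F.map g.op x = F.map g'.op x) :
    Q.FCartesian F := by
  intro x y hxy
  refine Q.isSheafFor_coverPresieve_iff.1 hF x y
    ⟨hright x y hxy, fun h h' hh => by rw [cancel_mono Q.bottom |>.1 hh], fun g h hgh => ?_⟩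
  obtain ⟨l, rfl, rfl⟩ := hQ.exists_lift g h hgh
  rw [op_comp, op_comp, Functor.map_comp_apply, Functor.map_comp_apply, hxy]

/-- Separation for the diagonal square forces the restrictions of `x` to the two
projections `X ×_S X → X` to agree, as both restrict to `x` along the diagonal and to
the same section (coming from `y`) along `X' ×_{S'} X' → X ×_S X`. -/
theorem map_eq_map_of_comp_right_eq {P : Set (CDSquare C)} {Q : CDSquare C}
    (hdiag : HasDiagonalSquare P Q) (hF : ∀ D ∈ P, D.coverPresieve.IsSheafFor F)
    {x : F.obj (op Q.X)} {y : F.obj (op Q.S')} (hxy : F.map Q.top.op x = F.map Q.left.op y)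
    {Z : C} {g g' : Z ⟶ Q.X} (hgg' : g ≫ Q.right = g' ≫ Q.right) :
    F.map g.op x = F.map g'.op x := by
  obtain ⟨W, W', p₁, p₂, q₁, q₂, hW, hW', d, d', m, hcomm, hdp₁, hdp₂, -, -, hmp₁, hmp₂, hD⟩ :=
    hdiag
  have hcompat (q : W' ⟶ Q.X') : F.map (q ≫ Q.top).op x = F.map (q ≫ Q.left).op y := by
    rw [op_comp, op_comp, Functor.map_comp_apply, Functor.map_comp_apply, hxy]
  have hsymm : F.map p₁.op x = F.map p₂.op x := by
    refine ext_of_isSheafFor (hF _ hD) ?_ ?_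
    · simp only [← Functor.map_comp_apply, ← op_comp, hdp₁, hdp₂]
    · simp only [← Functor.map_comp_apply, ← op_comp, hmp₁, hmp₂, hcompat, hW'.w]
  obtain ⟨l, rfl, rfl⟩ := hW.exists_lift g g' hgg'
  rw [op_comp, op_comp, Functor.map_comp_apply, Functor.map_comp_apply, hsymm]

end CDSquare

theorem generate_coverPresieve_mem_cdTopology {P : Set (CDSquare C)} {Q : CDSquare C}
    (hQ : Q ∈ P) : Sieve.generate Q.coverPresieve ∈ cdTopology P Q.S :=
  (GrothendieckTopology.mem_sInf _ _).2 fun _ hJ => hJ Q hQ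

theorem isSheafFor_coverPresieve_of_isSheaf {P : Set (CDSquare C)} {F : Cᵒᵖ ⥤ Type w}
    (hF : Presieve.IsSheaf (cdTopology P) F) {Q : CDSquare C} (hQ : Q ∈ P) :
    Q.coverPresieve.IsSheafFor F :=
  (Presieve.isSheafFor_iff_generate _).2 (hF _ (generate_coverPresieve_mem_cdTopology hQ))

/-- Condition (iii) makes the covering families of `P` a coverage, and sheaves for a coverage
can be tested on its covering families alone. -/
def cdCoverage (P : Set (CDSquare C))
    (h3 : ∀ Q ∈ P, ∀ {U : C} (u : U ⟶ Q.S), ∃ Q' ∈ P, IsCDBaseChange Q Q' u) :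
    Coverage C where
  coverings X := {R | ∃ Q ∈ P, ∃ e : Q.S = X, R = e ▸ Q.coverPresieve}
  pullback := by
    rintro X Y f S ⟨Q, hQ, rfl, rfl⟩
    obtain ⟨Q', hQ', rfl, pX, pS', -, hX, hS', -, -⟩ := h3 Q hQ f
    refine ⟨Q'.coverPresieve, ⟨Q', hQ', rfl, rfl⟩, ?_⟩
    rintro Z g ⟨_ | _⟩
    · exact ⟨Q.S', pS', Q.bottom, Presieve.ofArrows.mk false, by simpa using hS'.w⟩
    · exact ⟨Q.X, pX, Q.right, Presieve.ofArrows.mk true, by simpa using hX.w⟩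

theorem cdTopology_le_toGrothendieck_cdCoverage (P : Set (CDSquare C))
    (h3 : ∀ Q ∈ P, ∀ {U : C} (u : U ⟶ Q.S), ∃ Q' ∈ P, IsCDBaseChange Q Q' u) :
    cdTopology P ≤ (cdCoverage P h3).toGrothendieck :=
  sInf_le fun Q hQ => Coverage.Saturate.of Q.S Q.coverPresieve ⟨Q, hQ, rfl, rfl⟩

theorem isSheaf_cdTopology_of_fCartesian {P : Set (CDSquare C)}
    (h3 : ∀ Q ∈ P, ∀ {U : C} (u : U ⟶ Q.S), ∃ Q' ∈ P, IsCDBaseChange Q Q' u)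
    {F : Cᵒᵖ ⥤ Type w} (hF : ∀ Q ∈ P, Q.FCartesian F) : Presieve.IsSheaf (cdTopology P) F := by
  refine Presieve.isSheaf_of_le F (cdTopology_le_toGrothendieck_cdCoverage P h3) ?_
  rw [Presieve.isSheaf_coverage]
  rintro X R ⟨Q, hQ, rfl, rfl⟩
  exact CDSquare.isSheafFor_coverPresieve_of_fCartesian (hF Q hQ)

theorem stmt12_general (P : Set (CDSquare C))
    (h1 : ∀ Q ∈ P, IsPullback Q.top Q.left Q.right Q.bottom)
    (h2 : ∀ Q ∈ P, Mono Q.bottom)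
    (h3 : ∀ Q ∈ P, ∀ {U : C} (u : U ⟶ Q.S), ∃ Q' ∈ P, IsCDBaseChange Q Q' u)
    (h4 : ∀ Q ∈ P, HasDiagonalSquare P Q)
    (F : Cᵒᵖ ⥤ Type w) :
    Presieve.IsSheaf (cdTopology P) F ↔ ∀ Q ∈ P, Q.FCartesian F := by
  refine ⟨fun hF Q hQ => ?_, isSheaf_cdTopology_of_fCartesian h3⟩
  have hsheaf := fun D (hD : D ∈ P) => isSheafFor_coverPresieve_of_isSheaf hF hD
  have := h2 Q hQ
  exact CDSquare.fCartesian_of_isSheafFor (hsheaf Q hQ) (h1 Q hQ) fun x y hxy _ _ _ =>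
    CDSquare.map_eq_map_of_comp_right_eq (h4 Q hQ) hsheaf hxy

/-- Voevodsky's criterion: for a cd-structure `P` on a category with an initial object
such that every square of `P` is cartesian, has monomorphic horizontal bottom map, is
stable under base change within `P`, and whose diagonal square again belongs to `P`,
a presheaf of sets is a sheaf for the topology generated by `P` if and only if it is
excisive, i.e. sends every square of `P` to a cartesian square of sets. -/
theorem stmt12 [HasInitial C] (P : Set (CDSquare C))
    (h1 : ∀ Q ∈ P, IsPullback Q.top Q.left Q.right Q.bottom)
    (h2 : ∀ Q ∈ P, Mono Q.bottom)
    (h3 : ∀ Q ∈ P, ∀ {U : C} (u : U ⟶ Q.S), ∃ Q' ∈ P, IsCDBaseChange Q Q' u)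
    (h4 : ∀ Q ∈ P, HasDiagonalSquare P Q)
    (F : Cᵒᵖ ⥤ Type w) :
    Presieve.IsSheaf (cdTopology P) F ↔ ∀ Q ∈ P, Q.FCartesian F :=
  stmt12_general P h1 h2 h3 h4 F
end
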